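/- arXiv:2210.03099 — 3 statements merged into one kernel-verified Lean document; each statement's English description precedes it below -/
import Mathlib

section
/- Define U = Σ_{j=1}^d ψ_j α̃_j† and 𝒜 = λ·P₀VU. Then there exists a matrix W such that UW equals the orthogonal projector onto ℰ, WU = P₀, and U𝒜W = Σ_{j=1}^d E_j ψ_j ψ_j† (i.e., U is invertible on the subspace ℰ and conjugating 𝒜 by U yields the effective Hamiltonian on the d lowest perturbed eigenstates, with energies shifted by −E₀⁰). -/
/-!
STATEMENT 5: U is invertible on ℰ and U 𝒜 U⁻¹ is the (shifted) effective Hamiltonian.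
unperturbed ground space are linearly independent.
-/

open scoped BigOperators Matrix

noncomputable section

namespace Stmt5

/-- Hermitian inner product on `ℂ^D` (antilinear in the first argument). -/
def inn {D : ℕ} (u v : Fin D → ℂ) : ℂ := ∑ i, (starRingEnd ℂ) (u i) * v i

lemma vvv_mul {D : ℕ} (a b c e : Fin D → ℂ) :
    Matrix.vecMulVec a b * Matrix.vecMulVec c e = (b ⬝ᵥ c) • Matrix.vecMulVec a e := by
  ext i k
  simp [Matrix.mul_apply, Matrix.vecMulVec, dotProduct, Finset.sum_mul, Finset.mul_sum]
  exact Finset.sum_congr rfl (fun j _ => by ring)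

lemma mul_vvv {D : ℕ} (M : Matrix (Fin D) (Fin D) ℂ) (a b : Fin D → ℂ) :
    M * Matrix.vecMulVec a b = Matrix.vecMulVec (M *ᵥ a) b := by
  ext i k
  simp [Matrix.mul_apply, Matrix.vecMulVec, Matrix.mulVec, dotProduct,
    Finset.sum_mul, mul_assoc]

lemma smul_vvv {D : ℕ} (c : ℂ) (a b : Fin D → ℂ) :
    Matrix.vecMulVec (c • a) b = c • Matrix.vecMulVec a b := by
  ext i k; simp [Matrix.vecMulVec, mul_assoc]

lemma inn_eq_dot {D : ℕ} (u v : Fin D → ℂ) : inn u v = star u ⬝ᵥ v := by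
  simp [inn, dotProduct]

lemma dot_star_comm {D : ℕ} (u v : Fin D → ℂ) : star u ⬝ᵥ v = star (star v ⬝ᵥ u) := by
  simp [dotProduct, Finset.sum_congr, mul_comm]

theorem conjugated_A_is_effective_hamiltonian
    (D d : ℕ)
    (H0 : Matrix (Fin D) (Fin D) ℂ) (hH0 : H0.IsHermitian)
    (E00 : ℝ)
    -- `E00` is the lowest eigenvalue of `H0`, and it is attained
    (hlowest : ∀ (μ : ℝ) (v : Fin D → ℂ), v ≠ 0 → H0 *ᵥ v = (μ : ℂ) • v → E00 ≤ μ)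
    (hE00 : ∃ v : Fin D → ℂ, v ≠ 0 ∧ H0 *ᵥ v = (E00 : ℂ) • v)
    -- the eigenspace `ℰ⁰` of `E00` is `d`-dimensional
    (hdim : Module.finrank ℂ
      (Module.End.eigenspace (Matrix.mulVecLin H0) (E00 : ℂ)) = d)
    -- `P0` is the orthogonal projector onto `ℰ⁰`
    (P0 : Matrix (Fin D) (Fin D) ℂ) (hP0herm : P0.IsHermitian)
    (hP0fix : ∀ v : Fin D → ℂ, H0 *ᵥ v = (E00 : ℂ) • v → P0 *ᵥ v = v)
    (hP0into : ∀ v : Fin D → ℂ, H0 *ᵥ (P0 *ᵥ v) = (E00 : ℂ) • (P0 *ᵥ v))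
    -- `V` Hermitian, `λ ≥ 0`, `H = H0 + λ V`
    (V : Matrix (Fin D) (Fin D) ℂ) (hV : V.IsHermitian) (lam : ℝ) (hlam : 0 ≤ lam)
    -- `ψ_j` are orthonormal eigenvectors of `H`, with eigenvalues `Ẽ_j`
    (ψ : Fin d → Fin D → ℂ) (Etld : Fin d → ℝ)
    (horth : ∀ i j, inn (ψ i) (ψ j) = if i = j then 1 else 0)
    (heig : ∀ j, (H0 + lam • V) *ᵥ ψ j = (Etld j : ℂ) • ψ j)
    -- `ℰ⁰` and `ℰ = span{ψ_j}` are non-orthogonal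
    (hno1 : ∀ v : Fin D → ℂ, H0 *ᵥ v = (E00 : ℂ) • v → v ≠ 0 → ∃ j, inn (ψ j) v ≠ 0)
    (hno2 : ∀ v ∈ Submodule.span ℂ (Set.range ψ), v ≠ 0 →
      ∃ w : Fin D → ℂ, H0 *ᵥ w = (E00 : ℂ) • w ∧ inn w v ≠ 0)
    -- the biorthogonal family `α̃_j ∈ ℰ⁰` with `⟨α_j, α̃_{j'}⟩ = δ_{jj'}` resolving `P₀`
    (αt : Fin d → Fin D → ℂ)
    (hαtmem : ∀ j, H0 *ᵥ αt j = (E00 : ℂ) • αt j)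
    (hbiorth : ∀ j j', inn (P0 *ᵥ ψ j) (αt j') = if j = j' then 1 else 0)
    (hres1 : P0 = ∑ j : Fin d, Matrix.vecMulVec (P0 *ᵥ ψ j) (star (αt j)))
    (hres2 : P0 = ∑ j : Fin d, Matrix.vecMulVec (αt j) (star (P0 *ᵥ ψ j))) :
    -- with `U = Σ_j ψ_j α̃_j†` and `𝒜 = λ P₀ V U`:
    ∃ W : Matrix (Fin D) (Fin D) ℂ,
      (∑ j : Fin d, Matrix.vecMulVec (ψ j) (star (αt j))) * W
          = ∑ j : Fin d, Matrix.vecMulVec (ψ j) (star (ψ j)) ∧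
      W * (∑ j : Fin d, Matrix.vecMulVec (ψ j) (star (αt j))) = P0 ∧
      (∑ j : Fin d, Matrix.vecMulVec (ψ j) (star (αt j)))
          * (lam • (P0 * V * (∑ j : Fin d, Matrix.vecMulVec (ψ j) (star (αt j))))) * W
        = ∑ j : Fin d, (Etld j - E00) • Matrix.vecMulVec (ψ j) (star (ψ j)) := by
  classical
  set U : Matrix (Fin D) (Fin D) ℂ := ∑ j : Fin d, Matrix.vecMulVec (ψ j) (star (αt j)) with hU
  set W : Matrix (Fin D) (Fin D) ℂ :=
    ∑ j : Fin d, Matrix.vecMulVec (P0 *ᵥ ψ j) (star (ψ j)) with hW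
  have hδ1 : ∀ j k : Fin d, star (αt j) ⬝ᵥ (P0 *ᵥ ψ k) = if j = k then 1 else 0 := by
    intro j k
    rw [dot_star_comm, ← inn_eq_dot, hbiorth k j]
    by_cases h : j = k
    · simp [h]
    · simp [h, Ne.symm h]
  have hδ2 : ∀ j k : Fin d, star (ψ j) ⬝ᵥ ψ k = if j = k then 1 else 0 := by
    intro j k; rw [← inn_eq_dot]; exact horth j k
  have hUW : U * W = ∑ j : Fin d, Matrix.vecMulVec (ψ j) (star (ψ j)) := by
    rw [hU, hW, Finset.sum_mul]
    simp only [Finset.mul_sum, vvv_mul, hδ1, ite_smul, one_smul, zero_smul]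
    simp [Finset.sum_ite_eq]
  have hWU : W * U = P0 := by
    rw [hU, hW, Finset.sum_mul]
    simp only [Finset.mul_sum, vvv_mul, hδ2, ite_smul, one_smul, zero_smul]
    simp [Finset.sum_ite_eq, ← hres1]
  refine ⟨W, hUW, hWU, ?_⟩
  -- P0 * H0 = E00 • P0
  have hH0P0 : H0 * P0 = (E00 : ℂ) • P0 := by
    ext i k
    have h := congrFun (hP0into (Pi.single k 1)) i
    simpa [Matrix.mulVec, Matrix.mul_apply, dotProduct, Pi.single_apply,
      mul_ite, mul_zero, mul_one, Finset.mul_sum, Finset.sum_mul, mul_comm, mul_left_comm,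
      mul_assoc] using h
  have hPH : P0 * H0 = (E00 : ℂ) • P0 := by
    calc P0 * H0 = (H0 * P0)ᴴ := by
          rw [Matrix.conjTranspose_mul, hP0herm.eq, hH0.eq]
      _ = (E00 : ℂ) • P0 := by
          rw [hH0P0, Matrix.conjTranspose_smul, hP0herm.eq, Complex.star_def,
            Complex.conj_ofReal]
  have hlamV : lam • V = (lam : ℂ) • V := by
    ext i j; simp [Complex.real_smul]
  have key : ∀ j, (lam : ℂ) • ((P0 * V) *ᵥ ψ j)
      = ((Etld j : ℂ) - (E00 : ℂ)) • (P0 *ᵥ ψ j) := by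
    intro j
    have h := congrArg (fun x => P0 *ᵥ x) (heig j)
    simp only [Matrix.add_mulVec, Matrix.mulVec_add, hlamV, Matrix.smul_mulVec,
      Matrix.mulVec_smul, Matrix.mulVec_mulVec] at h
    rw [hPH, Matrix.smul_mulVec] at h
    have h2 := sub_eq_of_eq_add' h.symm
    rw [sub_smul]
    exact h2.symm
  -- compute λ • (P0 V) * (U W)
  have hstep : (lam : ℂ) • ((P0 * V) * (U * W))
      = ∑ j : Fin d, ((Etld j : ℂ) - (E00 : ℂ)) •
          Matrix.vecMulVec (P0 *ᵥ ψ j) (star (ψ j)) := by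
    rw [hUW, Finset.mul_sum, Finset.smul_sum]
    refine Finset.sum_congr rfl (fun j _ => ?_)
    rw [mul_vvv, ← smul_vvv, ← smul_vvv, key j]
  have hUM : ∀ j, U * Matrix.vecMulVec (P0 *ᵥ ψ j) (star (ψ j))
      = Matrix.vecMulVec (ψ j) (star (ψ j)) := by
    intro j
    rw [hU, Finset.sum_mul]
    simp only [vvv_mul, hδ1, ite_smul, one_smul, zero_smul]
    simp [Finset.sum_ite_eq]
  have hlamM : ∀ M : Matrix (Fin D) (Fin D) ℂ, lam • M = (lam : ℂ) • M := by
    intro M; ext i j; simp [Complex.real_smul]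
  have hEsmul : ∀ (j : Fin d) (M : Matrix (Fin D) (Fin D) ℂ),
      (Etld j - E00) • M = ((Etld j : ℂ) - (E00 : ℂ)) • M := by
    intro j M; ext i k; simp [Complex.real_smul]
  calc U * (lam • (P0 * V * U)) * W
      = U * ((lam : ℂ) • ((P0 * V) * (U * W))) := by
        rw [hlamM]
        rw [Matrix.mul_smul, Matrix.smul_mul, Matrix.mul_smul]
        congr 1
        rw [Matrix.mul_assoc, Matrix.mul_assoc, Matrix.mul_assoc]
    _ = U * (∑ j : Fin d, ((Etld j : ℂ) - (E00 : ℂ)) •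
          Matrix.vecMulVec (P0 *ᵥ ψ j) (star (ψ j))) := by rw [hstep]
    _ = ∑ j : Fin d, ((Etld j : ℂ) - (E00 : ℂ)) •
          Matrix.vecMulVec (ψ j) (star (ψ j)) := by
        rw [Finset.mul_sum]
        refine Finset.sum_congr rfl (fun j _ => ?_)
        rw [Matrix.mul_smul, hUM j]
    _ = ∑ j : Fin d, (Etld j - E00) • Matrix.vecMulVec (ψ j) (star (ψ j)) := by
        refine Finset.sum_congr rfl (fun j _ => ?_)
        rw [hEsmul]


end Stmt5
end
end

section
/- Define U = Σ_{j=1}^d ψ_j α̃_j†, and let B = Σ_{μ: E_μ⁰ ≠ E₀⁰} (E₀⁰ − E_μ⁰)^{−1} P_μ, where H⁰ = Σ_μ E_μ⁰ P_μ is the spectral decomposition of H⁰ into its distinct eigenvalues E_μ⁰ with orthogonal spectral projectors P_μ (so B is the inverse of E₀⁰I − H⁰ on the range of Q₀). Then U satisfies the governing equation U = P₀ + B·λ·(VU − UVU). -/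
/-!
STATEMENT 6: the governing equation U = P₀ + B·λ·(VU − UVU).
unperturbed ground space are linearly independent.
-/

open scoped BigOperators Matrix

noncomputable section

namespace Stmt6

/-- Hermitian inner product on `ℂ^D` (antilinear in the first argument). -/
def inn {D : ℕ} (u v : Fin D → ℂ) : ℂ := ∑ i, (starRingEnd ℂ) (u i) * v i

lemma inn_eq {D : ℕ} (u v : Fin D → ℂ) : inn u v = dotProduct (star u) v := rfl

lemma inn_conj {D : ℕ} (u v : Fin D → ℂ) : inn u v = (starRingEnd ℂ) (inn v u) := by
  rw [inn, inn, map_sum]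
  refine Finset.sum_congr rfl fun i _ => ?_
  rw [map_mul, Complex.conj_conj]
  ring

lemma inn_mulVec {D : ℕ} (M : Matrix (Fin D) (Fin D) ℂ) (u v : Fin D → ℂ) :
    inn u (M *ᵥ v) = inn (Mᴴ *ᵥ u) v := by
  simp only [inn, Matrix.mulVec, dotProduct, Matrix.conjTranspose_apply, map_sum,
    map_mul, Finset.mul_sum, Finset.sum_mul]
  rw [Finset.sum_comm]
  refine Finset.sum_congr rfl fun i _ => Finset.sum_congr rfl fun k _ => ?_
  simp only [starRingEnd_apply, star_star]
  ring

lemma mul_vecMulVec' {D : ℕ} (M : Matrix (Fin D) (Fin D) ℂ) (u v : Fin D → ℂ) :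
    M * Matrix.vecMulVec u v = Matrix.vecMulVec (M *ᵥ u) v := by
  ext i k
  simp only [Matrix.mul_apply, Matrix.vecMulVec_apply, Matrix.mulVec, dotProduct,
    Finset.sum_mul]
  exact Finset.sum_congr rfl fun j _ => by ring

lemma vecMulVec_mul' {D : ℕ} (u v : Fin D → ℂ) (M : Matrix (Fin D) (Fin D) ℂ) :
    Matrix.vecMulVec u v * M = Matrix.vecMulVec u (v ᵥ* M) := by
  ext i k
  simp only [Matrix.mul_apply, Matrix.vecMulVec_apply, Matrix.vecMul, dotProduct,
    Finset.mul_sum]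
  exact Finset.sum_congr rfl fun j _ => by ring

lemma vecMulVec_mul_vecMulVec' {D : ℕ} (a b c e : Fin D → ℂ) :
    Matrix.vecMulVec a b * Matrix.vecMulVec c e
      = dotProduct b c • Matrix.vecMulVec a e := by
  ext i k
  simp only [Matrix.mul_apply, Matrix.vecMulVec_apply, Matrix.smul_apply, dotProduct,
    smul_eq_mul, Finset.sum_mul]
  exact Finset.sum_congr rfl fun j _ => by ring

lemma vecMulVec_smul_left {D : ℕ} (c : ℂ) (u v : Fin D → ℂ) :
    Matrix.vecMulVec (c • u) v = c • Matrix.vecMulVec u v := by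
  ext i k
  simp only [Matrix.vecMulVec_apply, Matrix.smul_apply, Pi.smul_apply, smul_eq_mul]
  ring

lemma vecMulVec_smul_right {D : ℕ} (c : ℂ) (u v : Fin D → ℂ) :
    Matrix.vecMulVec u (c • v) = c • Matrix.vecMulVec u v := by
  ext i k
  simp only [Matrix.vecMulVec_apply, Matrix.smul_apply, Pi.smul_apply, smul_eq_mul]
  ring

theorem governing_equation
    (D d : ℕ)
    (H0 : Matrix (Fin D) (Fin D) ℂ) (hH0 : H0.IsHermitian)
    (E00 : ℝ)
    -- `E00` is the lowest eigenvalue of `H0`, and it is attained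
    (hlowest : ∀ (μ : ℝ) (v : Fin D → ℂ), v ≠ 0 → H0 *ᵥ v = (μ : ℂ) • v → E00 ≤ μ)
    (hE00 : ∃ v : Fin D → ℂ, v ≠ 0 ∧ H0 *ᵥ v = (E00 : ℂ) • v)
    -- the eigenspace `ℰ⁰` of `E00` is `d`-dimensional
    (hdim : Module.finrank ℂ
      (Module.End.eigenspace (Matrix.mulVecLin H0) (E00 : ℂ)) = d)
    -- `P0` is the orthogonal projector onto `ℰ⁰`
    (P0 : Matrix (Fin D) (Fin D) ℂ) (hP0herm : P0.IsHermitian)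
    (hP0fix : ∀ v : Fin D → ℂ, H0 *ᵥ v = (E00 : ℂ) • v → P0 *ᵥ v = v)
    (hP0into : ∀ v : Fin D → ℂ, H0 *ᵥ (P0 *ᵥ v) = (E00 : ℂ) • (P0 *ᵥ v))
    -- `V` Hermitian, `λ ≥ 0`, `H = H0 + λ V`
    (V : Matrix (Fin D) (Fin D) ℂ) (hV : V.IsHermitian) (lam : ℝ) (hlam : 0 ≤ lam)
    -- `ψ_j` are orthonormal eigenvectors of `H`, with eigenvalues `Ẽ_j`
    (ψ : Fin d → Fin D → ℂ) (Etld : Fin d → ℝ)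
    (horth : ∀ i j, inn (ψ i) (ψ j) = if i = j then 1 else 0)
    (heig : ∀ j, (H0 + lam • V) *ᵥ ψ j = (Etld j : ℂ) • ψ j)
    -- `ℰ⁰` and `ℰ = span{ψ_j}` are non-orthogonal
    (hno1 : ∀ v : Fin D → ℂ, H0 *ᵥ v = (E00 : ℂ) • v → v ≠ 0 → ∃ j, inn (ψ j) v ≠ 0)
    (hno2 : ∀ v ∈ Submodule.span ℂ (Set.range ψ), v ≠ 0 →
      ∃ w : Fin D → ℂ, H0 *ᵥ w = (E00 : ℂ) • w ∧ inn w v ≠ 0)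
    -- the biorthogonal family `α̃_j ∈ ℰ⁰` with `⟨α_j, α̃_{j'}⟩ = δ_{jj'}` resolving `P₀`
    (αt : Fin d → Fin D → ℂ)
    (hαtmem : ∀ j, H0 *ᵥ αt j = (E00 : ℂ) • αt j)
    (hbiorth : ∀ j j', inn (P0 *ᵥ ψ j) (αt j') = if j = j' then 1 else 0)
    (hres1 : P0 = ∑ j : Fin d, Matrix.vecMulVec (P0 *ᵥ ψ j) (star (αt j)))
    (hres2 : P0 = ∑ j : Fin d, Matrix.vecMulVec (αt j) (star (P0 *ᵥ ψ j)))
    -- spectral decomposition `H⁰ = Σ_μ E_μ⁰ P_μ` into distinct eigenvalues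
    (N : ℕ) (Em : Fin N → ℝ) (Pm : Fin N → Matrix (Fin D) (Fin D) ℂ)
    (hEminj : Function.Injective Em)
    (hdecomp : H0 = ∑ μ : Fin N, Em μ • Pm μ)
    (hsum : ∑ μ : Fin N, Pm μ = 1)
    (hPmherm : ∀ μ, (Pm μ).IsHermitian)
    (hPmidem : ∀ μ, Pm μ * Pm μ = Pm μ)
    (hPmorth : ∀ μ ν, μ ≠ ν → Pm μ * Pm ν = 0)
    (hPmne : ∀ μ, Pm μ ≠ 0)
    -- `E₀⁰` is the eigenvalue `E_{μ₀}`, and `P₀ = P_{μ₀}`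
    (μ0 : Fin N) (hμ0 : Em μ0 = E00) (hP0 : P0 = Pm μ0) :
    -- with `U = Σ_j ψ_j α̃_j†` and
    -- `B = Σ_{μ : E_μ⁰ ≠ E₀⁰} (E₀⁰ − E_μ⁰)⁻¹ P_μ`, `U` satisfies the governing equation
    (∑ j : Fin d, Matrix.vecMulVec (ψ j) (star (αt j)))
      = P0 +
        lam • ((∑ μ ∈ Finset.univ.filter (fun μ : Fin N => Em μ ≠ E00),
            (E00 - Em μ)⁻¹ • Pm μ) *
          (V * (∑ j : Fin d, Matrix.vecMulVec (ψ j) (star (αt j)))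
            - (∑ j : Fin d, Matrix.vecMulVec (ψ j) (star (αt j))) * V *
              (∑ j : Fin d, Matrix.vecMulVec (ψ j) (star (αt j))))) := by
  classical
  set U : Matrix (Fin D) (Fin D) ℂ :=
    ∑ j : Fin d, Matrix.vecMulVec (ψ j) (star (αt j)) with hUdef
  set B : Matrix (Fin D) (Fin D) ℂ :=
    ∑ μ ∈ Finset.univ.filter (fun μ : Fin N => Em μ ≠ E00),
      (E00 - Em μ)⁻¹ • Pm μ with hBdef
  -- biorthogonality in dot-product form
  have hcross : ∀ j j' : Fin d,
      dotProduct (star (αt j)) (ψ j') = if j = j' then 1 else 0 := by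
    intro j j'
    have h1 : P0 *ᵥ αt j = αt j := hP0fix _ (hαtmem j)
    have h2 : inn (ψ j') (αt j) = if j' = j then 1 else 0 := by
      calc inn (ψ j') (αt j) = inn (ψ j') (P0 *ᵥ αt j) := by rw [h1]
        _ = inn (P0ᴴ *ᵥ ψ j') (αt j) := inn_mulVec _ _ _
        _ = inn (P0 *ᵥ ψ j') (αt j) := by rw [hP0herm.eq]
        _ = _ := hbiorth j' j
    have h3 : inn (αt j) (ψ j') = if j = j' then 1 else 0 := by
      rw [inn_conj, h2]
      by_cases h : j = j' <;> simp [h, eq_comm]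
    rw [← inn_eq]
    exact h3
  -- product of two dyads
  have hprod : ∀ j j' : Fin d,
      Matrix.vecMulVec (ψ j) (star (αt j)) * Matrix.vecMulVec (ψ j') (star (αt j'))
        = if j = j' then Matrix.vecMulVec (ψ j) (star (αt j')) else 0 := by
    intro j j'
    rw [vecMulVec_mul_vecMulVec', hcross j j']
    by_cases h : j = j' <;> simp [h]
  -- U absorbs dyads on the left
  have hUv : ∀ j' : Fin d,
      U * Matrix.vecMulVec (ψ j') (star (αt j'))
        = Matrix.vecMulVec (ψ j') (star (αt j')) := by
    intro j'
    rw [hUdef, Finset.sum_mul]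
    rw [Finset.sum_congr rfl fun j _ => hprod j j']
    simp
  have hUU : U * U = U := by
    rw [hUdef, Finset.mul_sum]
    exact Finset.sum_congr rfl fun j _ => hUv j
  -- U * H0 = E00 • U
  have hUH0 : U * H0 = (E00 : ℂ) • U := by
    rw [hUdef, Finset.sum_mul, Finset.smul_sum]
    refine Finset.sum_congr rfl fun j _ => ?_
    rw [vecMulVec_mul']
    have : star (αt j) ᵥ* H0 = (E00 : ℂ) • star (αt j) := by
      conv_lhs => rw [← hH0.eq]
      rw [← Matrix.star_mulVec, hαtmem j, star_smul, Complex.star_def, Complex.conj_ofReal]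
    rw [this, vecMulVec_smul_right]
  -- A = H * U
  set A : Matrix (Fin D) (Fin D) ℂ :=
    ∑ j : Fin d, (Etld j : ℂ) • Matrix.vecMulVec (ψ j) (star (αt j)) with hAdef
  have hHU : (H0 + lam • V) * U = A := by
    rw [hUdef, Finset.mul_sum, hAdef]
    refine Finset.sum_congr rfl fun j _ => ?_
    rw [mul_vecMulVec', heig j, vecMulVec_smul_left]
  have hUA : U * A = A := by
    rw [hAdef, Finset.mul_sum]
    refine Finset.sum_congr rfl fun j _ => ?_
    rw [Matrix.mul_smul, hUv j]
  -- the key identity (E00 • U − H0 U) = lam • (V U − U V U)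
  have hkey : (E00 : ℂ) • U - H0 * U = lam • (V * U - U * V * U) := by
    have e1 : H0 * U + lam • (V * U) = A := by
      rw [← hHU, add_mul, Matrix.smul_mul]
    have e2 : (E00 : ℂ) • U + lam • (U * V * U) = A := by
      rw [← hUA, ← e1, mul_add, ← mul_assoc, hUH0, Matrix.smul_mul, hUU,
        Matrix.mul_smul, mul_assoc]
    rw [smul_sub]
    have h := e1.trans e2.symm
    rw [sub_eq_sub_iff_add_eq_add, ← h]
    abel
  -- B * (E00 • 1 − H0) = 1 − P0
  have hBQ : B * ((E00 : ℂ) • (1 : Matrix (Fin D) (Fin D) ℂ) - H0) = 1 - P0 := by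
    have hterm : ∀ μ : Fin N,
        Pm μ * ((E00 : ℂ) • (1 : Matrix (Fin D) (Fin D) ℂ) - H0)
          = ((E00 - Em μ : ℝ) : ℂ) • Pm μ := by
      intro μ
      have hPmH0 : Pm μ * H0 = ((Em μ : ℝ) : ℂ) • Pm μ := by
        rw [hdecomp, Finset.mul_sum]
        rw [Finset.sum_eq_single μ]
        · rw [Matrix.mul_smul, hPmidem μ, ← algebraMap_smul ℂ (Em μ) (Pm μ)]
          rfl
        · intro ν _ hν
          rw [Matrix.mul_smul, hPmorth μ ν (Ne.symm hν), smul_zero]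
        · intro h; exact absurd (Finset.mem_univ μ) h
      rw [mul_sub, hPmH0, Matrix.mul_smul, mul_one]
      push_cast
      rw [sub_smul]
    have hfilter : Finset.univ.filter (fun μ : Fin N => Em μ ≠ E00)
        = Finset.univ.erase μ0 := by
      rw [← Finset.filter_ne' Finset.univ μ0]
      refine Finset.filter_congr fun μ _ => ?_
      constructor
      · intro h h'; exact h (h' ▸ hμ0)
      · intro h h'; exact h (hEminj (h'.trans hμ0.symm))
    rw [hBdef, Finset.sum_mul]
    have : ∀ μ ∈ Finset.univ.filter (fun μ : Fin N => Em μ ≠ E00),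
        ((E00 - Em μ)⁻¹ • Pm μ) * ((E00 : ℂ) • (1 : Matrix (Fin D) (Fin D) ℂ) - H0)
          = Pm μ := by
      intro μ hμ
      have hne : Em μ ≠ E00 := (Finset.mem_filter.mp hμ).2
      have hne' : ((E00 - Em μ : ℝ) : ℂ) ≠ 0 := by
        simp only [ne_eq, Complex.ofReal_eq_zero, sub_eq_zero]
        exact fun h => hne h.symm
      push_cast at hne'
      rw [Matrix.smul_mul, hterm μ, ← algebraMap_smul ℂ ((E00 - Em μ)⁻¹)]
      rw [smul_smul]
      have : (algebraMap ℝ ℂ) (E00 - Em μ)⁻¹ * ((E00 - Em μ : ℝ) : ℂ) = 1 := by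
        simp only [Complex.coe_algebraMap]
        push_cast
        exact inv_mul_cancel₀ hne'
      rw [this, one_smul]
    rw [Finset.sum_congr rfl this, hfilter, hP0]
    have := Finset.add_sum_erase Finset.univ Pm (Finset.mem_univ μ0)
    rw [hsum] at this
    rw [eq_sub_iff_add_eq, add_comm]
    exact this
  -- P0 * U = P0
  have hP0U : P0 * U = P0 := by
    rw [hUdef, Finset.mul_sum]
    rw [Finset.sum_congr rfl fun j _ => mul_vecMulVec' P0 (ψ j) (star (αt j))]
    exact hres1.symm
  -- assemble
  have hfinal : lam • (B * (V * U - U * V * U)) = U - P0 := by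
    rw [← Matrix.mul_smul, ← hkey]
    have : (E00 : ℂ) • U - H0 * U
        = ((E00 : ℂ) • (1 : Matrix (Fin D) (Fin D) ℂ) - H0) * U := by
      rw [sub_mul, Matrix.smul_mul, one_mul]
    rw [this, ← mul_assoc, hBQ, sub_mul, one_mul, hP0U]
  rw [hfinal]
  abel

end Stmt6
end
end

section
/- The second-order contribution is proportional to the ground-space projector: P₀ V² P₀ = (Σ_{s=1}^r (c_s² + k − 1)) · P₀. -/
/-!
STATEMENT 12: P₀ V² P₀ = (Σ_s (c_s² + k − 1)) · P₀.
`H^target ⊗ (|0⟩⟨0|)^{⊗rk}` in its low-energy subspace, up to a polynomial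
shift `f(λ)·Π_λ` and an error of order `λ^{k+1}`, for all `0 ≤ λ ≤ λ_max`.
-/

open scoped BigOperators Matrix

noncomputable section

namespace Stmt12

/-- Pauli X. -/
def PX : Matrix (Fin 2) (Fin 2) ℂ := !![0, 1; 1, 0]
/-- Pauli Y. -/
def PY : Matrix (Fin 2) (Fin 2) ℂ := !![0, -Complex.I; Complex.I, 0]
/-- Pauli Z. -/
def PZ : Matrix (Fin 2) (Fin 2) ℂ := !![1, 0; 0, -1]
/-- `|1⟩⟨1|`. -/
def ketbra1 : Matrix (Fin 2) (Fin 2) ℂ := !![0, 0; 0, 1]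

/-- `σ = n_X X + n_Y Y + n_Z Z` for some real unit vector `(n_X, n_Y, n_Z)`. -/
def IsUnitPauli (A : Matrix (Fin 2) (Fin 2) ℂ) : Prop :=
  ∃ nx ny nz : ℝ, nx ^ 2 + ny ^ 2 + nz ^ 2 = 1 ∧ A = nx • PX + ny • PY + nz • PZ

variable {ι : Type} [Fintype ι] [DecidableEq ι]

/-- The operator acting as `A` on qubit `i` and as the identity on all other qubits. -/
def act (i : ι) (A : Matrix (Fin 2) (Fin 2) ℂ) : Matrix (ι → Fin 2) (ι → Fin 2) ℂ :=
  fun f g => if ∀ j, j ≠ i → f j = g j then A (f i) (g i) else 0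

/-- The ℓ²→ℓ² operator norm of a matrix. -/
def opNorm (M : Matrix (ι → Fin 2) (ι → Fin 2) ℂ) : ℝ :=
  ‖Matrix.toEuclideanCLM (𝕜 := ℂ) M‖

/-- The outer product `v v†`. -/
def outer (v : (ι → Fin 2) → ℂ) : Matrix (ι → Fin 2) (ι → Fin 2) ℂ :=
  Matrix.vecMulVec v (star v)

/-- Index type for `n` target qubits together with `r` registers of `k` auxiliary qubits. -/
abbrev Idx (n k r : ℕ) : Type := Fin n ⊕ (Fin r × Fin k)

/-- `a_j^{(s)} = X_{s,j} · X_{s,(j+1) mod k}` on the auxiliary qubits. -/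
def aop (n k r : ℕ) [NeZero k] (s : Fin r) (j : Fin k) :
    Matrix (Idx n k r → Fin 2) (Idx n k r → Fin 2) ℂ :=
  act (Sum.inr (s, j)) PX * act (Sum.inr (s, j + 1)) PX

/-- The coefficients `c̃_{s,j}`: `c̃_{s,1} = -(-1)^k c_s` and `c̃_{s,j} = 1` otherwise. -/
def ctil (k : ℕ) [NeZero k] {r : ℕ} (c : Fin r → ℝ) (s : Fin r) (j : Fin k) : ℝ :=
  if j = 0 then -(-1 : ℝ) ^ k * c s else 1

/-- The term `h_s = σ_{s,1} ⊗ ⋯ ⊗ σ_{s,k}` acting on the `k` distinct target qubits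
`pos s 1, …, pos s k` and as the identity on the remaining target qubits. -/
def hterm (n k r : ℕ) (pos : Fin r → Fin k → Fin n)
    (σ : Fin r → Fin k → Matrix (Fin 2) (Fin 2) ℂ) (s : Fin r) :
    Matrix (Fin n → Fin 2) (Fin n → Fin 2) ℂ :=
  fun f g =>
    (∏ j : Fin k, σ s j (f (pos s j)) (g (pos s j))) *
      (if ∀ i : Fin n, (∀ j : Fin k, pos s j ≠ i) → f i = g i then 1 else 0)

/-- The target Hamiltonian `H^target = Σ_s c_s h_s`. -/
def Htarget (n k r : ℕ) (c : Fin r → ℝ) (pos : Fin r → Fin k → Fin n)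
    (σ : Fin r → Fin k → Matrix (Fin 2) (Fin 2) ℂ) :
    Matrix (Fin n → Fin 2) (Fin n → Fin 2) ℂ :=
  ∑ s : Fin r, c s • hterm n k r pos σ s

/-- The unperturbed auxiliary Hamiltonian `H^aux = Σ_{s,j} |1⟩⟨1|_{s,j}`. -/
def Haux (n k r : ℕ) : Matrix (Idx n k r → Fin 2) (Idx n k r → Fin 2) ℂ :=
  ∑ s : Fin r, ∑ j : Fin k, act (Sum.inr (s, j)) ketbra1

/-- The perturbation `V = Σ_s Σ_j c̃_{s,j} σ_{s,j} ⊗ a_j^{(s)}`. -/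
def Vpert (n k r : ℕ) [NeZero k] (c : Fin r → ℝ) (pos : Fin r → Fin k → Fin n)
    (σ : Fin r → Fin k → Matrix (Fin 2) (Fin 2) ℂ) :
    Matrix (Idx n k r → Fin 2) (Idx n k r → Fin 2) ℂ :=
  ∑ s : Fin r, ∑ j : Fin k,
    ctil k c s j • (act (Sum.inl (pos s j)) (σ s j) * aop n k r s j)

/-- The gadget Hamiltonian `H^gad = H^aux + λ V`. -/
def Hgad (n k r : ℕ) [NeZero k] (c : Fin r → ℝ) (pos : Fin r → Fin k → Fin n)
    (σ : Fin r → Fin k → Matrix (Fin 2) (Fin 2) ℂ) (lam : ℝ) :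
    Matrix (Idx n k r → Fin 2) (Idx n k r → Fin 2) ℂ :=
  Haux n k r + lam • Vpert n k r c pos σ

/-- `M ⊗ (|0⟩⟨0|)^{⊗ rk}` : a target-register operator tensored with the projector
onto the all-zero state of the auxiliary registers. -/
def kronZero (n k r : ℕ) (M : Matrix (Fin n → Fin 2) (Fin n → Fin 2) ℂ) :
    Matrix (Idx n k r → Fin 2) (Idx n k r → Fin 2) ℂ :=
  fun f g =>
    M (f ∘ Sum.inl) (g ∘ Sum.inl) *
      (if (∀ x, f (Sum.inr x) = 0) ∧ (∀ x, g (Sum.inr x) = 0) then 1 else 0)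

/-- `P₀ = I ⊗ (|0⟩⟨0|)^{⊗rk}`, the projector onto the ground space of `H^aux`. -/
def P0 (n k r : ℕ) : Matrix (Idx n k r → Fin 2) (Idx n k r → Fin 2) ℂ :=
  kronZero n k r 1

/-! ### Auxiliary machinery: tensor products of single-qubit operators -/

/-- `|0⟩⟨0|`. -/
def E00 : Matrix (Fin 2) (Fin 2) ℂ := !![1, 0; 0, 0]

/-- Tensor product of single-qubit matrices `A i` over a finite support `S`. -/
def tensorOn (S : Finset ι) (A : ι → Matrix (Fin 2) (Fin 2) ℂ) :
    Matrix (ι → Fin 2) (ι → Fin 2) ℂ :=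
  fun f g => (∏ i ∈ S, A i (f i) (g i)) * (if ∀ j ∉ S, f j = g j then 1 else 0)

theorem prod_ite_mem_boole (S : Finset ι) (C : ι → Matrix (Fin 2) (Fin 2) ℂ)
    (f g : ι → Fin 2) :
    (∏ i, (if i ∈ S then C i (f i) (g i) else if f i = g i then 1 else 0))
      = tensorOn S C f g := by
  rw [tensorOn, Finset.prod_ite, Finset.prod_boole, Finset.filter_mem_eq_inter,
    Finset.univ_inter]
  congr 1
  have h : (∀ i ∈ Finset.univ.filter (fun x => x ∉ S), f i = g i) ↔ (∀ j ∉ S, f j = g j) := by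
    simp
  simp only [h]

theorem act_eq (i : ι) (A : Matrix (Fin 2) (Fin 2) ℂ) :
    act i A = tensorOn {i} (fun _ => A) := by
  funext f g
  simp only [act, tensorOn, Finset.prod_singleton, Finset.mem_singleton]
  by_cases h : ∀ j, j ≠ i → f j = g j
  · rw [if_pos h, if_pos fun j hj => h j hj, mul_one]
  · rw [if_neg h, if_neg fun h' => h fun j hj => h' j hj, mul_zero]

theorem tensorOn_mul (S T : Finset ι) (A B : ι → Matrix (Fin 2) (Fin 2) ℂ) :
    tensorOn S A * tensorOn T B =
      tensorOn (S ∪ T) (fun i => (if i ∈ S then A i else 1) * (if i ∈ T then B i else 1)) := by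
  funext f g
  show ∑ h, tensorOn S A f h * tensorOn T B h g = _
  have key : ∀ h : ι → Fin 2, tensorOn S A f h * tensorOn T B h g =
      ∏ i, ((if i ∈ S then A i (f i) (h i) else if f i = h i then 1 else 0) *
            (if i ∈ T then B i (h i) (g i) else if h i = g i then 1 else 0)) := by
    intro h
    rw [Finset.prod_mul_distrib, prod_ite_mem_boole S (fun i => A i) f h,
      prod_ite_mem_boole T (fun i => B i) h g]
  rw [Finset.sum_congr rfl fun h _ => key h]
  rw [← Fintype.piFinset_univ,
    ← Finset.prod_univ_sum (fun _ => (Finset.univ : Finset (Fin 2)))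
      (fun i b => (if i ∈ S then A i (f i) b else if f i = b then 1 else 0) *
        (if i ∈ T then B i b (g i) else if b = g i then 1 else 0))]
  have coord : ∀ i : ι,
      (∑ b : Fin 2, ((if i ∈ S then A i (f i) b else if f i = b then 1 else 0) *
            (if i ∈ T then B i b (g i) else if b = g i then 1 else 0))) =
      (if i ∈ S ∪ T then
        ((if i ∈ S then A i else 1) * (if i ∈ T then B i else 1)) (f i) (g i)
       else if f i = g i then 1 else 0) := by
    intro i
    by_cases hS : i ∈ S <;> by_cases hT : i ∈ T <;>
      simp [hS, hT, Matrix.mul_apply, Matrix.one_apply, ite_and, mul_ite, ite_mul,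
        eq_comm]
  rw [Finset.prod_congr rfl fun i _ => coord i,
    prod_ite_mem_boole (S ∪ T) (fun i => (if i ∈ S then A i else 1) * (if i ∈ T then B i else 1)) f g]

theorem tensorOn_congr (S : Finset ι) {A B : ι → Matrix (Fin 2) (Fin 2) ℂ}
    (h : ∀ i ∈ S, A i = B i) : tensorOn S A = tensorOn S B := by
  funext f g
  unfold tensorOn
  rw [Finset.prod_congr rfl fun i hi => by rw [h i hi]]

theorem tensorOn_eq_one (S : Finset ι) {A : ι → Matrix (Fin 2) (Fin 2) ℂ}
    (h : ∀ i ∈ S, A i = 1) : tensorOn S A = 1 := by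
  rw [tensorOn_congr S h]
  funext f g
  rw [show tensorOn S (fun _ => (1:Matrix (Fin 2) (Fin 2) ℂ)) f g =
    ∏ i, (if i ∈ S then (1:Matrix (Fin 2) (Fin 2) ℂ) (f i) (g i)
      else if f i = g i then 1 else 0) from (prod_ite_mem_boole S _ f g).symm]
  simp only [Matrix.one_apply, ite_self]
  rw [Finset.prod_boole]
  simp [funext_iff]

theorem tensorOn_eq_zero (S : Finset ι) {A : ι → Matrix (Fin 2) (Fin 2) ℂ}
    {i : ι} (hi : i ∈ S) (h : A i = 0) : tensorOn S A = 0 := by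
  funext f g
  unfold tensorOn
  rw [Finset.prod_eq_zero hi (by rw [h]; rfl), zero_mul]
  rfl

/-! ### 2×2 computations -/

theorem PX_mul_PX : PX * PX = 1 := by
  ext i j; fin_cases i <;> fin_cases j <;>
    simp [PX, Matrix.mul_apply, Fin.sum_univ_two, Matrix.one_apply]

theorem E00_mul_PX_mul_E00 : E00 * PX * E00 = 0 := by
  ext i j; fin_cases i <;> fin_cases j <;>
    simp [PX, E00, Matrix.mul_apply, Fin.sum_univ_two]

theorem E00_mul_E00 : E00 * E00 = E00 := by
  ext i j; fin_cases i <;> fin_cases j <;>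
    simp [E00, Matrix.mul_apply, Fin.sum_univ_two]

theorem E00_apply (a b : Fin 2) : E00 a b = if a = 0 ∧ b = 0 then 1 else 0 := by
  fin_cases a <;> fin_cases b <;> simp [E00]

theorem IsUnitPauli.sq {A : Matrix (Fin 2) (Fin 2) ℂ} (h : IsUnitPauli A) : A * A = 1 := by
  obtain ⟨nx, ny, nz, h1, rfl⟩ := h
  have hc : (nx:ℂ)^2 + (ny:ℂ)^2 + (nz:ℂ)^2 = 1 := by
    exact_mod_cast congrArg Complex.ofReal h1
  ext i j; fin_cases i <;> fin_cases j <;>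
    simp [PX, PY, PZ, Matrix.mul_apply, Fin.sum_univ_two, Matrix.one_apply,
      Complex.real_smul] <;>
    ring_nf <;>
    linear_combination hc - (ny:ℂ)^2 * Complex.I_sq

/-! ### Fin arithmetic -/

theorem finv1 (k : ℕ) [NeZero k] (hk : 3 ≤ k) : ((1:Fin k) : ℕ) = 1 := by
  rw [Fin.val_one']; exact Nat.mod_eq_of_lt (by omega)

theorem fin_add_one_ne (k : ℕ) [NeZero k] (hk : 3 ≤ k) (j : Fin k) : j + 1 ≠ j := by
  intro h
  have h1 : (1 : Fin k) = 0 := add_left_cancel (a := j) (b := 1) (c := 0) (by simpa using h)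
  have h2 := finv1 k hk
  rw [h1] at h2; simp at h2

theorem fin_add_two_ne (k : ℕ) [NeZero k] (hk : 3 ≤ k) (j : Fin k) : j + 1 + 1 ≠ j := by
  intro h
  have h1 : (1 + 1 : Fin k) = 0 :=
    add_left_cancel (a := j) (b := 1 + 1) (c := 0) (by rw [add_zero, ← add_assoc]; exact h)
  have h2 : ((1 + 1 :Fin k) : ℕ) = 2 := by
    rw [Fin.val_add, finv1 k hk]; exact Nat.mod_eq_of_lt (by omega)
  rw [h1] at h2; simp at h2

theorem pair_witness {k r : ℕ} [NeZero k] (hk : 3 ≤ k) {s s' : Fin r} {j j' : Fin k}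
    (h : (s,j) ≠ (s',j')) :
    ∃ w : Fin r × Fin k, (w = (s,j) ∨ w = (s,j+1)) ∧ ¬(w = (s',j') ∨ w = (s',j'+1)) := by
  by_cases h1 : ((s,j) = (s',j') ∨ (s,j) = (s',j'+1))
  · by_cases h2 : ((s,j+1) = (s',j') ∨ (s,j+1) = (s',j'+1))
    · exfalso
      rcases h1 with h1 | h1
      · exact h h1
      · rw [Prod.mk.injEq] at h1
        obtain ⟨hs, hj⟩ := h1
        rcases h2 with h2 | h2 <;> rw [Prod.mk.injEq] at h2
        · obtain ⟨_, hj2⟩ := h2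
          exact fin_add_two_ne k hk j (by rw [← hj2] at hj; exact hj.symm)
        · obtain ⟨_, hj2⟩ := h2
          have : j = j' := by
            have := add_right_cancel (a := j) (b := 1) (c := j') hj2
            exact this
          rw [this] at hj
          exact fin_add_one_ne k hk j' hj.symm
    · exact ⟨(s,j+1), Or.inr rfl, h2⟩
  · exact ⟨(s,j), Or.inl rfl, h1⟩

/-! ### Structure of `P0` and the perturbation terms -/

/-- The set of auxiliary-qubit indices. -/
def SRset (n k r : ℕ) : Finset (Idx n k r) := Finset.univ.filter (fun i => i.isRight)

theorem mem_SRset {n k r : ℕ} (x : Fin r × Fin k) : Sum.inr x ∈ SRset n k r := by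
  simp [SRset]

theorem P0_eq (n k r : ℕ) : P0 n k r = tensorOn (SRset n k r) (fun _ => E00) := by
  funext f g
  show (1 : Matrix (Fin n → Fin 2) (Fin n → Fin 2) ℂ) (f ∘ Sum.inl) (g ∘ Sum.inl)
      * _ = _
  have hprod : (∏ i ∈ SRset n k r, E00 (f i) (g i))
      = if (∀ x, f (Sum.inr x) = 0) ∧ (∀ x, g (Sum.inr x) = 0) then 1 else 0 := by
    rw [Finset.prod_congr rfl fun i _ => E00_apply (f i) (g i), Finset.prod_boole]
    have hiff : (∀ i ∈ SRset n k r, f i = 0 ∧ g i = 0)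
        ↔ ((∀ x, f (Sum.inr x) = 0) ∧ (∀ x, g (Sum.inr x) = 0)) := by
      constructor
      · intro hh
        exact ⟨fun x => (hh _ (mem_SRset x)).1, fun x => (hh _ (mem_SRset x)).2⟩
      · rintro ⟨h1, h2⟩ i hi
        rcases i with a | x
        · simp [SRset] at hi
        · exact ⟨h1 x, h2 x⟩
    simp only [hiff]
  have hone : (1 : Matrix (Fin n → Fin 2) (Fin n → Fin 2) ℂ) (f ∘ Sum.inl) (g ∘ Sum.inl)
      = if ∀ j ∉ SRset n k r, f j = g j then 1 else 0 := by
    rw [Matrix.one_apply]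
    have hiff : (f ∘ Sum.inl = g ∘ Sum.inl) ↔ (∀ j ∉ SRset n k r, f j = g j) := by
      constructor
      · intro hh j hj
        rcases j with a | x
        · exact congrFun hh a
        · exact absurd (mem_SRset x) hj
      · intro hh
        funext a
        exact hh (Sum.inl a) (by simp [SRset])
    simp only [hiff]
  rw [hone, tensorOn, hprod, mul_comm]

/-- The support of the term `σ_{s,j} ⊗ a_j^{(s)}`. -/
def Sset (n k r : ℕ) [NeZero k] (pos : Fin r → Fin k → Fin n) (s : Fin r) (j : Fin k) :
    Finset (Idx n k r) :=
  {Sum.inl (pos s j), Sum.inr (s, j), Sum.inr (s, j + 1)}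

/-- The single-qubit factors of the term `σ_{s,j} ⊗ a_j^{(s)}`. -/
def Afun (n k r : ℕ) [NeZero k] (pos : Fin r → Fin k → Fin n)
    (σ : Fin r → Fin k → Matrix (Fin 2) (Fin 2) ℂ) (s : Fin r) (j : Fin k) :
    Idx n k r → Matrix (Fin 2) (Fin 2) ℂ :=
  fun i => if i = Sum.inl (pos s j) then σ s j else PX

theorem term_rep (n k r : ℕ) [NeZero k] (hk : 3 ≤ k) (pos : Fin r → Fin k → Fin n)
    (σ : Fin r → Fin k → Matrix (Fin 2) (Fin 2) ℂ) (s : Fin r) (j : Fin k) :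
    act (Sum.inl (pos s j)) (σ s j) * aop n k r s j
      = tensorOn (Sset n k r pos s j) (Afun n k r pos σ s j) := by
  have hne : j ≠ j + 1 := (fin_add_one_ne k hk j).symm
  have hne2 : j + 1 ≠ j := fin_add_one_ne k hk j
  rw [aop, act_eq, act_eq, act_eq, tensorOn_mul, tensorOn_mul]
  have hset : ({Sum.inl (pos s j)} : Finset (Idx n k r))
      ∪ ({Sum.inr (s,j)} ∪ {Sum.inr (s,j+1)}) = Sset n k r pos s j := by
    rw [← Finset.insert_eq, ← Finset.insert_eq]; rfl
  rw [hset]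
  apply tensorOn_congr
  intro i hi
  rcases (by simpa [Sset] using hi :
      i = Sum.inl (pos s j) ∨ i = Sum.inr (s,j) ∨ i = Sum.inr (s,j+1)) with rfl | rfl | rfl <;>
    simp [Afun, hne, hne2]

theorem P0_idem (n k r : ℕ) : P0 n k r * P0 n k r = P0 n k r := by
  rw [P0_eq, tensorOn_mul, Finset.union_self]
  exact tensorOn_congr _ (fun i hi => by simp only [if_pos hi]; exact E00_mul_E00)

theorem key_term (n k r : ℕ) [NeZero k] (hk : 3 ≤ k)
    (pos : Fin r → Fin k → Fin n) (σ : Fin r → Fin k → Matrix (Fin 2) (Fin 2) ℂ)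
    (hσ : ∀ s j, IsUnitPauli (σ s j)) (s s' : Fin r) (j j' : Fin k) :
    P0 n k r * (tensorOn (Sset n k r pos s j) (Afun n k r pos σ s j) *
      tensorOn (Sset n k r pos s' j') (Afun n k r pos σ s' j')) * P0 n k r
      = if (s,j) = (s',j') then P0 n k r else 0 := by
  by_cases h : (s,j) = (s',j')
  · rw [if_pos h]
    have hs : s = s' := congrArg Prod.fst h
    have hj : j = j' := congrArg Prod.snd h
    subst hs; subst hj
    have hTT : tensorOn (Sset n k r pos s j) (Afun n k r pos σ s j) *
        tensorOn (Sset n k r pos s j) (Afun n k r pos σ s j) = 1 := by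
      rw [tensorOn_mul, Finset.union_self]
      apply tensorOn_eq_one
      intro i hi
      simp only [if_pos hi]
      by_cases hil : i = Sum.inl (pos s j)
      · simp only [Afun, if_pos hil]
        exact IsUnitPauli.sq (hσ s j)
      · simp only [Afun, if_neg hil]
        exact PX_mul_PX
    rw [hTT, mul_one, P0_idem]
  · rw [if_neg h]
    obtain ⟨w, hw1, hw2⟩ := pair_witness hk h
    rw [P0_eq, tensorOn_mul, tensorOn_mul, tensorOn_mul]
    have hwS : Sum.inr w ∈ Sset n k r pos s j := by
      rcases hw1 with rfl | rfl <;> simp [Sset]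
    have hwS' : Sum.inr w ∉ Sset n k r pos s' j' := by
      simp only [Sset, Finset.mem_insert, Finset.mem_singleton]
      rintro (hcon | hcon | hcon)
      · exact absurd hcon (by simp)
      · exact hw2 (Or.inl (Sum.inr.inj hcon))
      · exact hw2 (Or.inr (Sum.inr.inj hcon))
    have hwR : Sum.inr w ∈ SRset n k r := mem_SRset w
    apply tensorOn_eq_zero (i := Sum.inr w)
    · simp [hwR]
    · simp only [Finset.mem_union, hwR, hwS, hwS', Afun, if_true, or_true, true_or,
        if_pos, if_neg, mul_one, one_mul]
      simp [hwS', E00_mul_PX_mul_E00]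

theorem second_order_proportional_to_projector
    (n k r : ℕ) [NeZero k] (hk : 3 ≤ k) (hkn : k ≤ n) (hr : 1 ≤ r)
    (c : Fin r → ℝ) (pos : Fin r → Fin k → Fin n)
    (hpos : ∀ s, Function.Injective (pos s))
    (σ : Fin r → Fin k → Matrix (Fin 2) (Fin 2) ℂ)
    (hσ : ∀ s j, IsUnitPauli (σ s j)) :
    P0 n k r * (Vpert n k r c pos σ * Vpert n k r c pos σ) * P0 n k r
      = (∑ s : Fin r, ((c s) ^ 2 + (k : ℝ) - 1)) • P0 n k r := by
  classical
  set T : Fin r → Fin k → Matrix (Idx n k r → Fin 2) (Idx n k r → Fin 2) ℂ :=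
    fun s j => tensorOn (Sset n k r pos s j) (Afun n k r pos σ s j) with hT
  have hV : Vpert n k r c pos σ = ∑ s, ∑ j, ctil k c s j • T s j := by
    unfold Vpert
    refine Finset.sum_congr rfl fun s _ => Finset.sum_congr rfl fun j _ => ?_
    rw [term_rep n k r hk pos σ s j, hT]
  rw [hV]
  have expand : P0 n k r * ((∑ s, ∑ j, ctil k c s j • T s j) *
        (∑ s, ∑ j, ctil k c s j • T s j)) * P0 n k r
      = ∑ s, ∑ j, ∑ s', ∑ j', (ctil k c s j * ctil k c s' j') •
          (P0 n k r * (T s' j' * T s j) * P0 n k r) := by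
    simp only [Finset.mul_sum, Finset.sum_mul, smul_mul_assoc, mul_smul_comm, smul_smul,
      Finset.smul_sum]
  rw [expand]
  have collapse : ∀ s j, (∑ s', ∑ j', (ctil k c s j * ctil k c s' j') •
        (P0 n k r * (T s' j' * T s j) * P0 n k r))
      = (ctil k c s j * ctil k c s j) • P0 n k r := by
    intro s j
    have hkey : ∀ s' j', P0 n k r * (T s' j' * T s j) * P0 n k r
        = if (s',j') = (s,j) then P0 n k r else 0 :=
      fun s' j' => key_term n k r hk pos σ hσ s' s j' j
    rw [Finset.sum_eq_single s]
    · rw [Finset.sum_eq_single j]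
      · rw [hkey s j, if_pos rfl]
      · intro j' _ hj'
        rw [hkey s j', if_neg (fun hcon => hj' (congrArg Prod.snd hcon)), smul_zero]
      · intro habs; exact absurd (Finset.mem_univ j) habs
    · intro s' _ hs'
      apply Finset.sum_eq_zero
      intro j' _
      rw [hkey s' j', if_neg (fun hcon => hs' (congrArg Prod.fst hcon)), smul_zero]
    · intro habs; exact absurd (Finset.mem_univ s) habs
  rw [Finset.sum_congr rfl fun s _ => Finset.sum_congr rfl fun j _ => collapse s j]
  have step : ∀ s, (∑ j, (ctil k c s j * ctil k c s j) • P0 n k r)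
      = ((c s)^2 + (k:ℝ) - 1) • P0 n k r := by
    intro s
    rw [← Finset.sum_smul]
    congr 1
    have hterm : ∀ j : Fin k, ctil k c s j * ctil k c s j
        = (if j = 0 then (c s)^2 - 1 else 0) + 1 := by
      intro j
      by_cases hj : j = 0
      · simp only [ctil, if_pos hj]
        have h2 : ((-1:ℝ)^k)^2 = 1 := by
          rw [← pow_mul, mul_comm, pow_mul, neg_one_sq, one_pow]
        linear_combination (c s)^2 * h2
      · simp [ctil, hj]
    rw [Finset.sum_congr rfl fun j _ => hterm j, Finset.sum_add_distrib,
      Finset.sum_ite_eq' Finset.univ (0 : Fin k) (fun _ => (c s)^2 - 1)]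
    simp [Finset.card_univ]
    ring
  rw [Finset.sum_congr rfl fun s _ => step s, ← Finset.sum_smul]


end Stmt12
end
end
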